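/- Let p be a prime and n a natural number. Then the Möbius number of the elementary abelian group C_p^n (the direct product of n copies of the cyclic group of order p) is μ(C_p^n) = (-1)^n · p^{C(n,2)}, where C(n,2) is the binomial coefficient n choose 2. -/

import Mathlib

/-!
Subgroups of `C_p^n` are the subspaces of `𝔽_p^n`, so `μ(C_p^n)` is `μ(⊥, ⊤)` in the subspace
lattice of an `n`-dimensional space over a field with `q` elements. Weisner's theorem applied to a
line `ℓ` leaves only the complements of `ℓ` in the sum: `μ(⊥, ⊤) = -∑ μ(⊥, H)` over them. Each
complement `H` is a hyperplane, whose lower interval is the subspace lattice of `H`, and there are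
`q^(n-1)` of them. Hence `μ_n = -q^(n-1) μ_(n-1)`, which unrolls to `(-1)^n q^(n choose 2)`.
-/

open Finset

/-- The Möbius function of the subgroup lattice of a finite group `G`,
evaluated at a pair of subgroups. -/
noncomputable def subgroupMu (G : Type*) [Group G] [Finite G] (H K : Subgroup G) : ℤ :=
  letI : Fintype (Subgroup G) := Fintype.ofFinite _
  letI : DecidableEq (Subgroup G) := Classical.decEq _
  letI : @DecidableRel (Subgroup G) (Subgroup G) (· < ·) := Classical.decRel _
  letI : @DecidableRel (Subgroup G) (Subgroup G) (· ≤ ·) := Classical.decRel _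
  letI := Fintype.toLocallyFiniteOrder (α := Subgroup G)
  IncidenceAlgebra.mu ℤ H K

/-- The Möbius number of a finite group `G`: the value `μ(⊥, ⊤)` of the Möbius
function of its lattice of subgroups. -/
noncomputable def muGrp (G : Type*) [Group G] [Finite G] : ℤ :=
  subgroupMu G ⊥ ⊤

theorem IsAtom.sup_eq_top_iff {α : Type*} [Lattice α] [BoundedOrder α] {a b : α}
    (ha : IsAtom a) : b ⊔ a = ⊤ ↔ b = ⊤ ∨ IsCompl a b := by
  refine ⟨fun h => ?_, ?_⟩
  · by_cases hab : a ≤ b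
    · exact .inl (by rwa [sup_eq_left.2 hab] at h)
    · exact .inr ⟨ha.not_le_iff_disjoint.1 hab, codisjoint_iff.2 (by rwa [sup_comm])⟩
  · rintro (rfl | h)
    · exact top_sup_eq a
    · rw [sup_comm]
      exact h.sup_eq_top

namespace IncidenceAlgebra

variable {𝕜 α β : Type*} [AddCommGroup 𝕜] [One 𝕜]

section OrderEmbedding

variable [PartialOrder α] [PartialOrder β] [LocallyFiniteOrder α] [LocallyFiniteOrder β]
  [DecidableEq α] [DecidableEq β]

theorem mu_map_of_ordConnected (e : α ↪o β) (he : (Set.range e).OrdConnected) (a b : α) :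
    mu 𝕜 (e a) (e b) = mu 𝕜 a b := by
  obtain rfl | hab := eq_or_ne a b
  · simp
  have hIco : Ico (e a) (e b) = (Ico a b).map e.toEmbedding := by
    apply coe_injective
    rw [coe_map, coe_Ico, coe_Ico]
    exact (e.image_Ico he a b).symm
  rw [mu_eq_neg_sum_Ico_of_ne hab, mu_eq_neg_sum_Ico_of_ne (e.injective.ne hab), hIco, sum_map]
  congr 1
  exact sum_congr rfl fun x _ => mu_map_of_ordConnected e he a x
termination_by (Icc a b).card
decreasing_by
  obtain ⟨hax, hxb⟩ := mem_Ico.1 ‹x ∈ Ico a b›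
  exact card_lt_card (Icc_ssubset_Icc_right (hax.trans hxb.le) le_rfl hxb)

theorem mu_map_orderIso (e : α ≃o β) (a b : α) : mu 𝕜 (e a) (e b) = mu 𝕜 a b :=
  mu_map_of_ordConnected e.toOrderEmbedding (by simp [Set.ordConnected_univ]) a b

theorem eulerChar_congr [BoundedOrder α] [BoundedOrder β] (e : α ≃o β) :
    eulerChar 𝕜 α = eulerChar 𝕜 β := by
  rw [eulerChar, eulerChar, ← e.map_bot, ← e.map_top, mu_map_orderIso]

end OrderEmbedding

variable [Lattice α] [Fintype α] [LocallyFiniteOrder α] [DecidableEq α]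

/-- Weisner's theorem. -/
theorem sum_mu_bot_of_sup_eq [OrderBot α] {a b : α} (ha : a ≠ ⊥) (hab : a ≤ b) :
    ∑ x with x ⊔ a = b, mu 𝕜 ⊥ x = 0 := by
  -- Grouping `x ≤ b` by the value of `x ⊔ a ∈ [a, b]`: the total is `∑_{x ≤ b} μ(⊥, x) = 0`.
  have hsum : ∑ y ∈ Icc a b, ∑ x with x ⊔ a = y, mu 𝕜 ⊥ x = 0 := by
    have hIcc : ({x | x ⊔ a ∈ Icc a b} : Finset α) = Icc ⊥ b := by
      ext x
      simp only [mem_filter, mem_univ, true_and, mem_Icc, le_sup_right, sup_le_iff, bot_le]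
      exact and_iff_left hab
    rw [sum_fiberwise_eq_sum_filter, hIcc, sum_Icc_mu_right,
      if_neg (ne_bot_of_le_ne_bot ha hab).symm]
  have hbelow : ∑ y ∈ Ico a b, ∑ x with x ⊔ a = y, mu 𝕜 ⊥ x = 0 :=
    sum_eq_zero fun y hy => sum_mu_bot_of_sup_eq ha (mem_Ico.1 hy).1
  rwa [Icc_eq_cons_Ico hab, sum_cons, hbelow, add_zero] at hsum
termination_by (Icc a b).card
decreasing_by exact card_lt_card (Icc_ssubset_Icc_right hab le_rfl (mem_Ico.1 ‹y ∈ Ico a b›).2)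

open scoped Classical in
theorem mu_bot_top_eq_neg_sum_isCompl [BoundedOrder α] {a : α} (ha : IsAtom a) :
    mu 𝕜 (⊥ : α) ⊤ = -∑ x with IsCompl a x, mu 𝕜 ⊥ x := by
  have hweisner := sum_mu_bot_of_sup_eq (𝕜 := 𝕜) ha.ne_bot le_top
  have htop : (⊤ : α) ∉ ({x | IsCompl a x} : Finset α) := by
    simpa using fun h : IsCompl a ⊤ => ha.ne_bot (disjoint_top.1 h.disjoint)
  rw [filter_congr fun x _ => ha.sup_eq_top_iff, filter_or, filter_eq', if_pos (mem_univ _),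
    ← insert_eq, ← cons_eq_insert ⊤ _ htop, sum_cons] at hweisner
  exact eq_neg_of_add_eq_zero_left hweisner

end IncidenceAlgebra

open Module

namespace Submodule

theorem natCard_isCompl {K V : Type*} [Field K] [Finite K] [AddCommGroup V] [Module K V]
    [FiniteDimensional K V] (p : Submodule K V) :
    Nat.card {q // IsCompl p q} = Nat.card K ^ (finrank K p * finrank K (V ⧸ p)) := by
  -- Complements of `p` are the kernels of the projections onto `p`, which form a fibre of
  -- restriction to `p`, hence a coset of its kernel.
  let restrict : (V →ₗ[K] p) →ₗ[K] (p →ₗ[K] p) := LinearMap.lcomp K p p.subtype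
  have hsurj : Function.Surjective restrict := fun g => LinearMap.exists_extend g
  have hprojs : {f : V →ₗ[K] p // ∀ x : p, f x = x} ≃ restrict ⁻¹' {LinearMap.id} :=
    Equiv.subtypeEquivRight fun f => by simp [restrict, LinearMap.ext_iff]
  have hker : finrank K (LinearMap.ker restrict) = finrank K p * finrank K (V ⧸ p) := by
    have := restrict.finrank_range_add_finrank_ker
    rw [LinearMap.range_eq_top.2 hsurj, finrank_top, finrank_linearMap, finrank_linearMap,
      ← p.finrank_quotient_add_finrank] at this
    linarith
  calc Nat.card {q // IsCompl p q}
      = Nat.card (restrict ⁻¹' {LinearMap.id}) := Nat.card_congr (p.isComplEquivProj.trans hprojs)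
    _ = Nat.card (LinearMap.ker restrict) :=
      Nat.card_congr (restrict.toAddMonoidHom.fiberEquivKerOfSurjective hsurj _)
    _ = Nat.card K ^ (finrank K p * finrank K (V ⧸ p)) := by
      rw [natCard_eq_pow_finrank (K := K), hker]

variable {R M : Type*} [Ring R] [AddCommGroup M] [Module R M]

theorem range_mapSubtype_orderEmbedding (x : Submodule R M) :
    Set.range (MapSubtype.orderEmbedding x) = Set.Iic x := by
  ext c
  simp only [Set.mem_range, map_subtype_embedding_eq, Set.mem_Iic]
  refine ⟨fun ⟨c', hc'⟩ => hc' ▸ map_subtype_le x c', fun hc => ⟨comap x.subtype c, ?_⟩⟩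
  rw [map_comap_subtype, inf_eq_right.2 hc]

theorem mu_bot_eq_eulerChar {𝕜 : Type*} [AddCommGroup 𝕜] [One 𝕜]
    [LocallyFiniteOrder (Submodule R M)] [DecidableEq (Submodule R M)]
    (x : Submodule R M) [LocallyFiniteOrder (Submodule R x)] [DecidableEq (Submodule R x)] :
    IncidenceAlgebra.mu 𝕜 ⊥ x = IncidenceAlgebra.eulerChar 𝕜 (Submodule R x) := by
  have h := IncidenceAlgebra.mu_map_of_ordConnected (𝕜 := 𝕜) (MapSubtype.orderEmbedding x)
    (by rw [range_mapSubtype_orderEmbedding]; exact Set.ordConnected_Iic) ⊥ ⊤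
  rwa [map_subtype_embedding_eq, map_subtype_embedding_eq, map_bot, map_subtype_top] at h

end Submodule

open IncidenceAlgebra in
theorem eulerChar_submodule (K V : Type*) [Field K] [Finite K] [AddCommGroup V] [Module K V]
    [FiniteDimensional K V] [Fintype (Submodule K V)] [LocallyFiniteOrder (Submodule K V)]
    [DecidableEq (Submodule K V)] :
    eulerChar ℤ (Submodule K V) =
      (-1) ^ finrank K V * (Nat.card K : ℤ) ^ (finrank K V).choose 2 := by
  induction hr : finrank K V generalizing V with
  | zero =>
    have : Subsingleton V := (finrank_eq_zero_iff_of_free K V).1 hr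
    simp [eulerChar, Subsingleton.elim (⊤ : Submodule K V) ⊥]
  | succ r ih =>
    classical
    have : Nontrivial V := nontrivial_of_finrank_eq_succ hr
    obtain ⟨v, hv⟩ := exists_ne (0 : V)
    have hquot : finrank K (V ⧸ K ∙ v) = r := by
      have := (K ∙ v).finrank_quotient_add_finrank
      rw [finrank_span_singleton hv, hr] at this
      omega
    have hcompl : ∀ x ∈ ({x | IsCompl (K ∙ v) x} : Finset (Submodule K V)),
        mu ℤ ⊥ x = (-1) ^ r * (Nat.card K : ℤ) ^ r.choose 2 := by
      intro x hx
      have hx : finrank K x = r := by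
        have := Submodule.finrank_add_eq_of_isCompl (mem_filter.1 hx).2
        rw [finrank_span_singleton hv, hr] at this
        omega
      have : Finite V := Module.finite_of_finite K
      have : Fintype (Submodule K x) := Fintype.ofFinite _
      have : LocallyFiniteOrder (Submodule K x) := Fintype.toLocallyFiniteOrder
      rw [Submodule.mu_bot_eq_eulerChar, ih x hx]
    rw [eulerChar, mu_bot_top_eq_neg_sum_isCompl (nonzero_span_atom (K := K) v hv),
      sum_congr rfl hcompl, sum_const, ← Fintype.card_subtype, Fintype.card_eq_nat_card,
      Submodule.natCard_isCompl, finrank_span_singleton hv, one_mul, hquot,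
      Nat.choose_succ_succ', Nat.choose_one_right, nsmul_eq_mul]
    push_cast
    ring

theorem muGrp_eq_eulerChar (G : Type*) [Group G] [Finite G] [LocallyFiniteOrder (Subgroup G)]
    [DecidableEq (Subgroup G)] : muGrp G = IncidenceAlgebra.eulerChar ℤ (Subgroup G) := by
  unfold muGrp subgroupMu IncidenceAlgebra.eulerChar
  congr!
  exact Subsingleton.elim _ _

/-- The Möbius number of the elementary abelian group `C_p^n` is
`(-1)^n * p^(n choose 2)`. -/
theorem muGrp_elementary_abelian (p : ℕ) [Fact p.Prime] (n : ℕ) :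
    muGrp (Fin n → Multiplicative (ZMod p)) = (-1) ^ n * (p : ℤ) ^ (n.choose 2) := by
  classical
  let e : Subgroup (Fin n → Multiplicative (ZMod p)) ≃o Submodule (ZMod p) (Fin n → ZMod p) :=
    (MulEquiv.funMultiplicative (Fin n) (ZMod p)).symm.mapSubgroup.trans
      (Subgroup.toAddSubgroup'.trans (AddSubgroup.toZModSubmodule p))
  let := Fintype.toLocallyFiniteOrder (α := Subgroup (Fin n → Multiplicative (ZMod p)))
  let := Fintype.toLocallyFiniteOrder (α := Submodule (ZMod p) (Fin n → ZMod p))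
  rw [muGrp_eq_eulerChar, IncidenceAlgebra.eulerChar_congr e, eulerChar_submodule,
    Module.finrank_fin_fun, Nat.card_zmod]
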